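/- Let H, X, Y be normed spaces, L : H → X, R : H → Y bounded linear operators, and suppose there is a stability constant C > 0 such that every V ∈ H with R V = 0 satisfies ‖V‖_H ≤ C ‖L V‖_X. Suppose also R admits a bounded linear right inverse R⁻¹ : Y → H (R ∘ R⁻¹ = id). If U ∈ H solves L U = F, R U = 0, and U_θ ∈ H satisfies ‖L U_θ - F‖_X² + ‖R U_θ‖_Y² ≤ ε², then ‖U - U_θ‖_H ≤ c ε with c = C(1 + ‖L‖ ‖R⁻¹‖) + ‖R⁻¹‖. -/
import Mathlib


/-- Error estimate for the least-squares method: with a stability bound for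
homogeneous boundary data and a bounded right inverse of the boundary
operator, a small loss implies a small error. -/
theorem stmt_5 {H X Y : Type*}
    [NormedAddCommGroup H] [NormedSpace ℝ H]
    [NormedAddCommGroup X] [NormedSpace ℝ X]
    [NormedAddCommGroup Y] [NormedSpace ℝ Y]
    (L : H →L[ℝ] X) (R : H →L[ℝ] Y) (Rinv : Y →L[ℝ] H)
    (hRinv : R.comp Rinv = ContinuousLinearMap.id ℝ Y)
    (C : ℝ) (hC : 0 < C)
    (hstab : ∀ V : H, R V = 0 → ‖V‖ ≤ C * ‖L V‖)
    (U : H) (F : X) (hLU : L U = F) (hRU : R U = 0)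
    (Uθ : H) (ε : ℝ) (hε : 0 ≤ ε)
    (hloss : ‖L Uθ - F‖ ^ 2 + ‖R Uθ‖ ^ 2 ≤ ε ^ 2) :
    ‖U - Uθ‖ ≤ (C * (1 + ‖L‖ * ‖Rinv‖) + ‖Rinv‖) * ε := by
  have h1 : ‖L Uθ - F‖ ≤ ε := by
    nlinarith [sq_nonneg ‖R Uθ‖, norm_nonneg (L Uθ - F), sq_nonneg (‖L Uθ - F‖ - ε)]
  have h2 : ‖R Uθ‖ ≤ ε := by
    nlinarith [sq_nonneg ‖L Uθ - F‖, norm_nonneg (R Uθ), sq_nonneg (‖R Uθ‖ - ε)]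
  set W : H := Uθ - Rinv (R Uθ) with hW
  have hRW : R W = 0 := by
    have := ContinuousLinearMap.ext_iff.mp hRinv (R Uθ)
    simp only [ContinuousLinearMap.comp_apply, ContinuousLinearMap.id_apply] at this
    simp [hW, map_sub, this]
  have hstabW : ‖U - W‖ ≤ C * ‖L (U - W)‖ := by
    apply hstab
    simp [map_sub, hRU, hRW]
  have hLW : ‖L (U - W)‖ ≤ ε + ‖L‖ * ‖Rinv‖ * ε := by
    have : L (U - W) = (F - L Uθ) + L (Rinv (R Uθ)) := by
      simp [hW, map_sub, hLU]; abel
    rw [this]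
    refine le_trans (norm_add_le _ _) (add_le_add ?_ ?_)
    · rw [norm_sub_rev]; exact h1
    · calc ‖L (Rinv (R Uθ))‖ ≤ ‖L‖ * ‖Rinv (R Uθ)‖ := L.le_opNorm _
        _ ≤ ‖L‖ * (‖Rinv‖ * ‖R Uθ‖) := by
            exact mul_le_mul_of_nonneg_left (Rinv.le_opNorm _) (norm_nonneg _)
        _ ≤ ‖L‖ * ‖Rinv‖ * ε := by
            rw [← mul_assoc]
            exact mul_le_mul_of_nonneg_left h2 (by positivity)
  have hR2 : ‖Rinv (R Uθ)‖ ≤ ‖Rinv‖ * ε :=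
    le_trans (Rinv.le_opNorm _) (mul_le_mul_of_nonneg_left h2 (norm_nonneg _))
  have : U - Uθ = (U - W) - Rinv (R Uθ) := by simp [hW]; abel
  rw [this]
  calc ‖(U - W) - Rinv (R Uθ)‖ ≤ ‖U - W‖ + ‖Rinv (R Uθ)‖ := norm_sub_le _ _
    _ ≤ C * (ε + ‖L‖ * ‖Rinv‖ * ε) + ‖Rinv‖ * ε := by
        refine add_le_add (le_trans hstabW ?_) hR2
        exact mul_le_mul_of_nonneg_left hLW hC.le
    _ = (C * (1 + ‖L‖ * ‖Rinv‖) + ‖Rinv‖) * ε := by ring
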